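/- arXiv:1506.03413 — 3 statements merged into one kernel-verified Lean document; each statement's English description precedes it below -/
import Mathlib

section
/- For every ω ∈ Ω and t ∈ ℝ₊, the set Ā_{ω,t} := {(ω',θ') ∈ Ω̄ : ω'_{t∧·} = ω_{t∧·} and θ' > t} is an atom of the σ-field F̄_t: for every C ∈ F̄_t, either Ā_{ω,t} ⊆ C or Ā_{ω,t} ∩ C = ∅. -/
open MeasureTheory MeasurableSpace
open scoped NNReal

/-- Paths on `ℝ₊`. -/
abbrev RPath : Type := ℝ≥0 → ℝ

/-- The enlarged space `Ω̄ = Ω × ℝ₊`, with canonical process `B(ω,θ) = ω`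
and `T(ω,θ) = θ`. -/
abbrev OmegaBar : Type := RPath × ℝ≥0

/-- The enlarged canonical filtration `F̄_t = σ(B_u, u ≤ t) ∨ σ({T ≤ u}, u ≤ t)`. -/
def Fbar (t : ℝ≥0) : MeasurableSpace OmegaBar :=
  (⨆ u ∈ Set.Iic t, MeasurableSpace.comap (fun x : OmegaBar => x.1 u)
      (inferInstance : MeasurableSpace ℝ)) ⊔
    MeasurableSpace.generateFrom {A | ∃ u ≤ t, A = {x : OmegaBar | x.2 ≤ u}}

/-! A set `A` is an atom of a σ-algebra `m` exactly when `m ≤ nonseparating A`; this reduces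
the theorem to checking the generators of `F̄_t`: each coordinate `B_u`, `u ≤ t`, is constant
on `Ā_{ω,t}`, and each `{T ≤ u}`, `u ≤ t`, is disjoint from it. -/

namespace MeasurableSpace

variable {α β : Type*}

def nonseparating (A : Set α) : MeasurableSpace α where
  MeasurableSet' S := ∀ x ∈ A, ∀ y ∈ A, x ∈ S ↔ y ∈ S
  measurableSet_empty _ _ _ _ := Iff.rfl
  measurableSet_compl _ hS x hx y hy := not_congr (hS x hx y hy)
  measurableSet_iUnion _ hf x hx y hy := by
    simpa only [Set.mem_iUnion] using exists_congr fun i => hf i x hx y hy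

variable {A S : Set α}

theorem subset_or_inter_eq_empty_of_measurableSet_nonseparating
    (hS : MeasurableSet[nonseparating A] S) : A ⊆ S ∨ A ∩ S = ∅ := by
  rcases (A ∩ S).eq_empty_or_nonempty with hAS | ⟨x₀, hx₀A, hx₀S⟩
  · exact Or.inr hAS
  · exact Or.inl fun x hx => (hS x hx x₀ hx₀A).mpr hx₀S

theorem measurableSet_nonseparating_of_disjoint (h : Disjoint A S) :
    MeasurableSet[nonseparating A] S := fun _ hx _ hy =>
  iff_of_false (Set.disjoint_left.mp h hx) (Set.disjoint_left.mp h hy)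

theorem comap_le_nonseparating [MeasurableSpace β] {f : α → β}
    (hf : ∀ x ∈ A, ∀ y ∈ A, f x = f y) :
    MeasurableSpace.comap f ‹MeasurableSpace β› ≤ nonseparating A := by
  rintro _ ⟨T, -, rfl⟩ x hx y hy
  simp only [Set.mem_preimage, hf x hx y hy]

end MeasurableSpace

theorem Fbar_le_nonseparating (ω : RPath) (t : ℝ≥0) :
    Fbar t ≤ nonseparating {y : OmegaBar | (∀ s ≤ t, y.1 s = ω s) ∧ t < y.2} := by
  refine sup_le (iSup₂_le fun u hu => comap_le_nonseparating ?_) ?_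
  · exact fun x hx y hy => (hx.1 u hu).trans (hy.1 u hu).symm
  · rw [generateFrom_le_iff]
    rintro _ ⟨u, hu, rfl⟩
    exact measurableSet_nonseparating_of_disjoint <| Set.disjoint_left.mpr
      fun y hy hyu => (hu.trans_lt hy.2).not_ge hyu

theorem Abar_atom_general (ω : RPath) (t : ℝ≥0)
    (C : Set OmegaBar) (hC : MeasurableSet[Fbar t] C) :
    {y : OmegaBar | (∀ s ≤ t, y.1 s = ω s) ∧ t < y.2} ⊆ C ∨
      {y : OmegaBar | (∀ s ≤ t, y.1 s = ω s) ∧ t < y.2} ∩ C = ∅ :=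
  subset_or_inter_eq_empty_of_measurableSet_nonseparating (Fbar_le_nonseparating ω t C hC)

/-- for `ω ∈ Ω` and `t ∈ ℝ₊`, the set
`Ā_{ω,t} = {(ω',θ') : ω'_{t∧·} = ω_{t∧·}, θ' > t}` is an atom of `F̄_t`:
every `C ∈ F̄_t` either contains `Ā_{ω,t}` or is disjoint from it. -/
theorem Abar_atom (ω : RPath) (hω : Continuous ω) (hω0 : ω 0 = 0) (t : ℝ≥0)
    (C : Set OmegaBar) (hC : MeasurableSet[Fbar t] C) :
    {y : OmegaBar | (∀ s ≤ t, y.1 s = ω s) ∧ t < y.2} ⊆ C ∨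
      {y : OmegaBar | (∀ s ≤ t, y.1 s = ω s) ∧ t < y.2} ∩ C = ∅ :=
  Abar_atom_general ω t C hC
end

section
/- Every F̄-stopping time τ with τ ≤ T is of the form τ(ω,θ) = τ₀(ω) ∧ θ for some stopping time τ₀ of the canonical filtration F on Ω; concretely, τ₀ can be taken as τ₀(ω) := sup_{n ∈ ℕ} τ(ω, n). -/
/-!
An `F̄_t`-measurable set cannot tell apart two values of `T` that both exceed `t`. Hence if
`τ(ω, θ) < θ`, then `τ(ω, θ') ≤ τ(ω, θ)` for every `θ' > τ(ω, θ)`: the map `θ ↦ τ(ω, θ)` is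
monotone and, once it drops below the diagonal, it freezes at the value `τ₀(ω)`. Slicing at a fixed
`θ` pulls `F̄_t` back into `F_t`, so `{τ₀ ≤ t} = ⋂ₙ {ω | τ(ω, n) ≤ t}` lies in `F_t`.
-/

open MeasureTheory MeasurableSpace
open scoped NNReal ENNReal

/-- The canonical filtration `F_t = σ(B_u, u ≤ t)` on path space. -/
def Fpath (t : ℝ≥0) : MeasurableSpace RPath :=
  ⨆ u ∈ Set.Iic t, MeasurableSpace.comap (fun ω : RPath => ω u)
    (inferInstance : MeasurableSpace ℝ)

/-- `τ : Ω̄ → ℝ₊` is an `F̄`-stopping time: `{τ ≤ t} ∈ F̄_t` for all `t`. -/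
def IsFbarStopping (τ : OmegaBar → ℝ≥0) : Prop :=
  ∀ t : ℝ≥0, MeasurableSet[Fbar t] {x : OmegaBar | τ x ≤ t}

/-- `σ : Ω → [0,∞]` is an `F`-stopping time on path space. -/
def IsFStopping (σ : RPath → ℝ≥0∞) : Prop :=
  ∀ t : ℝ≥0, MeasurableSet[Fpath t] {ω : RPath | σ ω ≤ t}

lemma Fbar_le {t : ℝ≥0} {m : MeasurableSpace OmegaBar}
    (h_path : ∀ u ≤ t, Measurable[m] fun x : OmegaBar => x.1 u)
    (h_time : ∀ u ≤ t, MeasurableSet[m] {x : OmegaBar | x.2 ≤ u}) :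
    Fbar t ≤ m :=
  sup_le (iSup₂_le fun u hu => (h_path u hu).comap_le)
    (generateFrom_le fun _ ⟨u, hu, hA⟩ => hA ▸ h_time u hu)

lemma measurable_eval_Fpath {t u : ℝ≥0} (hu : u ≤ t) :
    Measurable[Fpath t] fun ω : RPath => ω u :=
  Measurable.of_comap_le <| le_iSup₂ (f := fun u (_ : u ∈ Set.Iic t) =>
    MeasurableSpace.comap (fun ω : RPath => ω u) (inferInstance : MeasurableSpace ℝ)) u hu

lemma measurable_slice_Fpath_Fbar (t θ : ℝ≥0) :
    Measurable[Fpath t, Fbar t] fun ω : RPath => ((ω, θ) : OmegaBar) := by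
  refine measurable_iff_le_map.2 (Fbar_le (fun u hu => measurable_eval_Fpath hu) fun u _ => ?_)
  exact MeasurableSet.const (θ ≤ u) (m := Fpath t)

lemma mem_iff_mem_of_measurableSet_Fbar {t : ℝ≥0} {s : Set OmegaBar}
    (hs : MeasurableSet[Fbar t] s) {θ₁ θ₂ : ℝ≥0} (h₁ : t < θ₁) (h₂ : t < θ₂) (ω : RPath) :
    (ω, θ₁) ∈ s ↔ (ω, θ₂) ∈ s := by
  let m : MeasurableSpace OmegaBar :=
    { MeasurableSet' := fun s => ∀ ω : RPath, (ω, θ₁) ∈ s ↔ (ω, θ₂) ∈ s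
      measurableSet_empty := fun _ => Iff.rfl
      measurableSet_compl := fun _ hs ω => not_congr (hs ω)
      measurableSet_iUnion := fun _ hf ω => by
        simp only [Set.mem_iUnion]
        exact exists_congr fun i => hf i ω }
  refine Fbar_le (m := m) (fun _ _ _ _ _ => Iff.rfl) (fun u hu ω => ?_) s hs ω
  exact iff_of_false (fun h => (h.trans hu).not_gt h₁) (fun h => (h.trans hu).not_gt h₂)

namespace IsFbarStopping

variable {τ : OmegaBar → ℝ≥0}

lemma le_of_lt (hτ : IsFbarStopping τ) {ω : RPath} {θ θ' : ℝ≥0}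
    (hθ : τ (ω, θ) < θ) (hθ' : τ (ω, θ) < θ') :
    τ (ω, θ') ≤ τ (ω, θ) :=
  (mem_iff_mem_of_measurableSet_Fbar (hτ _) hθ hθ' ω).1 (le_refl (τ (ω, θ)))

lemma monotone_right (hτ : IsFbarStopping τ) (hτT : ∀ x : OmegaBar, τ x ≤ x.2) (ω : RPath) :
    Monotone fun θ => τ (ω, θ) := by
  intro θ θ' hθθ'
  rcases lt_or_ge (τ (ω, θ')) θ with hlt | hge
  · exact hτ.le_of_lt (hlt.trans_le hθθ') hlt
  · exact (hτT (ω, θ)).trans hge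

lemma isFStopping_iSup_nat (hτ : IsFbarStopping τ) :
    IsFStopping fun ω => ⨆ n : ℕ, (τ (ω, n) : ℝ≥0∞) := by
  intro t
  have hset : {ω : RPath | (⨆ n : ℕ, (τ (ω, n) : ℝ≥0∞)) ≤ t}
      = ⋂ n : ℕ, (fun ω : RPath => ((ω, (n : ℝ≥0)) : OmegaBar)) ⁻¹' {x | τ x ≤ t} := by
    ext ω
    simp only [Set.mem_ofPred_eq, iSup_le_iff, Set.mem_iInter, Set.mem_preimage,
      ENNReal.coe_le_coe]
  rw [hset]
  exact MeasurableSet.iInter fun n => measurable_slice_Fpath_Fbar t n (hτ t)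

lemma eq_min_iSup_nat (hτ : IsFbarStopping τ) (hτT : ∀ x : OmegaBar, τ x ≤ x.2)
    (x : OmegaBar) :
    (τ x : ℝ≥0∞) = min (⨆ n : ℕ, (τ (x.1, n) : ℝ≥0∞)) (x.2 : ℝ≥0∞) := by
  obtain ⟨ω, θ⟩ := x
  refine le_antisymm (le_min ?_ (ENNReal.coe_le_coe.2 (hτT (ω, θ)))) ?_
  · have hmono := hτ.monotone_right hτT ω (Nat.le_ceil θ)
    exact (ENNReal.coe_le_coe.2 hmono).trans
      (le_iSup (fun n : ℕ => (τ (ω, n) : ℝ≥0∞)) ⌈θ⌉₊)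
  rcases (hτT (ω, θ)).eq_or_lt with heq | hlt
  · exact min_le_of_right_le (ENNReal.coe_le_coe.2 heq.ge)
  refine min_le_of_left_le (iSup_le fun n => ENNReal.coe_le_coe.2 ?_)
  rcases le_or_gt (n : ℝ≥0) (τ (ω, θ)) with hn | hn
  · exact (hτT (ω, n)).trans hn
  · exact hτ.le_of_lt hlt hn

end IsFbarStopping

/-- every `F̄`-stopping time `τ ≤ T` has the form
`τ(ω,θ) = τ₀(ω) ∧ θ`, with `τ₀(ω) := sup_{n ∈ ℕ} τ(ω, n)` an `F`-stopping time. -/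
theorem stoppingTime_representation (τ : OmegaBar → ℝ≥0)
    (hτ : IsFbarStopping τ) (hτT : ∀ x : OmegaBar, τ x ≤ x.2) :
    IsFStopping (fun ω => ⨆ n : ℕ, (τ (ω, n) : ℝ≥0∞)) ∧
      ∀ x : OmegaBar, (τ x : ℝ≥0∞) = min (⨆ n : ℕ, (τ (x.1, n) : ℝ≥0∞)) (x.2 : ℝ≥0∞) :=
  ⟨hτ.isFStopping_iSup_nat, hτ.eq_min_iSup_nat hτT⟩
end

section
/- If τ(ω̄) < θ for some ω̄ = (ω,θ) ∈ Ω̄ and τ is an F̄-stopping time, then τ(ω, θ') = τ(ω, θ) for all θ' > θ. -/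
open MeasureTheory MeasurableSpace
open scoped NNReal

/-! The point `(ω, θ)` with `θ > t` lies in the atom `Ā_{ω,t}` of `F̄_t`, which only
remembers `ω` up to time `t` and that `T > t`. Applied to the `F̄_t`-event `{τ ≤ t}` with
`t = τ(ω, θ)`, this gives `τ(ω, θ') ≤ τ(ω, θ)` for every `θ' > θ`; since then also
`τ(ω, θ') < θ'`, the same argument with the roles of `θ` and `θ'` exchanged gives equality. -/

namespace MeasurableSpace

variable {α β : Type*}

def notSeparating (x y : α) : MeasurableSpace α where
  MeasurableSet' s := x ∈ s ↔ y ∈ s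
  measurableSet_empty := Iff.rfl
  measurableSet_compl _ hs := not_congr hs
  measurableSet_iUnion _ hf := by simp only [Set.mem_iUnion]; exact exists_congr hf

lemma measurableSet_notSeparating_iff {x y : α} {s : Set α} :
    MeasurableSet[notSeparating x y] s ↔ (x ∈ s ↔ y ∈ s) := Iff.rfl

lemma comap_le_notSeparating [m : MeasurableSpace β] {f : α → β} {x y : α} (hf : f x = f y) :
    m.comap f ≤ notSeparating x y := by
  rintro _ ⟨s, -, rfl⟩
  simp only [measurableSet_notSeparating_iff, Set.mem_preimage, hf]

end MeasurableSpace

lemma Fbar_le_notSeparating {t θ θ' : ℝ≥0} (ω : RPath) (hθ : t < θ) (hθ' : t < θ') :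
    Fbar t ≤ notSeparating (ω, θ) (ω, θ') := by
  refine sup_le (iSup₂_le fun u _ => comap_le_notSeparating rfl) (generateFrom_le ?_)
  rintro _ ⟨u, hu, rfl⟩
  exact iff_of_false (fun h : θ ≤ u => (h.trans hu).not_gt hθ)
    (fun h : θ' ≤ u => (h.trans hu).not_gt hθ')

lemma IsFbarStopping.le_of_lt_s7 {τ : OmegaBar → ℝ≥0} (hτ : IsFbarStopping τ) {ω : RPath}
    {θ θ' : ℝ≥0} (hθ : τ (ω, θ) < θ) (hθ' : τ (ω, θ) < θ') : τ (ω, θ') ≤ τ (ω, θ) :=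
  (Fbar_le_notSeparating ω hθ hθ' _ (hτ (τ (ω, θ)))).mp (le_refl (τ (ω, θ)))

/-- if `τ` is an `F̄`-stopping time and `τ(ω,θ) < θ`, then
`τ(ω,θ') = τ(ω,θ)` for all `θ' > θ`. -/
theorem stoppingTime_constant_after (τ : OmegaBar → ℝ≥0) (hτ : IsFbarStopping τ)
    (ω : RPath) (θ : ℝ≥0) (h : τ (ω, θ) < θ) :
    ∀ θ' : ℝ≥0, θ < θ' → τ (ω, θ') = τ (ω, θ) := by
  intro θ' hθθ'
  have hle : τ (ω, θ') ≤ τ (ω, θ) := hτ.le_of_lt_s7 h (h.trans hθθ')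
  have hlt : τ (ω, θ') < θ := hle.trans_lt h
  exact le_antisymm hle (hτ.le_of_lt_s7 (hlt.trans hθθ') hlt)
end
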